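/- Let Ω ⊂ ℝ^d be a bounded open set and ρ > 0. Assume r(x,u), b(x,u), σ(x,u) are continuous, bounded on Ω̄ × U, and Lipschitz continuous in x on a neighborhood of Ω̄ uniformly in u ∈ U, with Σ = σσᵀ ≥ 0 (degenerate ellipticity allowed), where U ⊂ ℝ^l is bounded with |U| = 1 and λ > 0. Define F(x,p,X) := λ ln ∫_U exp[(1/λ)(r(x,u) + b(x,u)·p + (1/2)tr(Σ(x,u)X))] du. Let μ, v ∈ C²(Ω) ∩ C(Ω̄) be bounded with ρμ(x) − F(x, Dμ(x), D²μ(x)) ≤ 0 and ρv(x) − F(x, Dv(x), D²v(x)) ≥ 0 for all x ∈ Ω, and sup_{x ∈ ∂Ω}(μ(x) − v(x)) ≤ 0. Then μ ≤ v in Ω. -/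

import Mathlib

open MeasureTheory Real Metric
noncomputable section

/-- First-order partial derivative `∂v/∂xᵢ`. -/
def pd1 (d : ℕ) (v : EuclideanSpace ℝ (Fin d) → ℝ) (x : EuclideanSpace ℝ (Fin d))
    (i : Fin d) : ℝ :=
  fderiv ℝ v x (EuclideanSpace.single i 1)

/-- Second-order partial derivative `∂²v/∂xᵢ∂xⱼ`. -/
def pd2 (d : ℕ) (v : EuclideanSpace ℝ (Fin d) → ℝ) (x : EuclideanSpace ℝ (Fin d))
    (i j : Fin d) : ℝ :=
  fderiv ℝ (fun y => fderiv ℝ v y (EuclideanSpace.single j 1)) x (EuclideanSpace.single i 1)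

/-- The exploratory elliptic operator
`F(x,p,X) = λ ln ∫_U exp[(1/λ)(r(x,u) + b(x,u)·p + (1/2) tr(Σ(x,u)X))] du`
with `Σ = σσᵀ`. -/
def expF (d l m : ℕ) (lam : ℝ) (U : Set (EuclideanSpace ℝ (Fin l)))
    (r : EuclideanSpace ℝ (Fin d) → EuclideanSpace ℝ (Fin l) → ℝ)
    (b : EuclideanSpace ℝ (Fin d) → EuclideanSpace ℝ (Fin l) → Fin d → ℝ)
    (σ' : EuclideanSpace ℝ (Fin d) → EuclideanSpace ℝ (Fin l) → Matrix (Fin d) (Fin m) ℝ)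
    (x : EuclideanSpace ℝ (Fin d)) (p : Fin d → ℝ) (X : Matrix (Fin d) (Fin d) ℝ) : ℝ :=
  lam * Real.log (∫ u in U, Real.exp ((1 / lam) *
    (r x u + ∑ i, b x u i * p i +
      (1 / 2) * ∑ i, ∑ j, (σ' x u * Matrix.transpose (σ' x u)) i j * X j i)))

open Filter Set in
lemma aux1d {g ψ : ℝ → ℝ} {c : ℝ}
    (hg : ∀ᶠ t in nhds (0:ℝ), HasDerivAt g (ψ t) t)
    (hψ : HasDerivAt ψ c 0) (hmax : IsLocalMax g 0) : c ≤ 0 := by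
  by_contra hc
  push_neg at hc
  have hψ0 : ψ 0 = 0 := by
    have hd : HasDerivAt g (ψ 0) 0 := hg.self_of_nhds
    have h2 := hmax.deriv_eq_zero
    rw [hd.deriv] at h2; exact h2
  have hslope := hasDerivAt_iff_tendsto_slope.1 hψ
  have h1 : ∀ᶠ t in nhdsWithin (0:ℝ) {(0:ℝ)}ᶜ, 0 < slope ψ 0 t :=
    hslope.eventually (eventually_gt_nhds hc)
  have hpos : ∀ᶠ t in nhdsWithin (0:ℝ) (Set.Ioi 0), 0 < ψ t := by
    have h2 : ∀ᶠ t in nhdsWithin (0:ℝ) (Set.Ioi 0), 0 < slope ψ 0 t :=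
      h1.filter_mono (nhdsWithin_mono _ (fun t ht => ne_of_gt ht))
    filter_upwards [h2, self_mem_nhdsWithin] with t ht ht0
    rw [slope_def_field, hψ0, sub_zero, sub_zero] at ht
    have := mul_pos ht ht0
    rwa [div_mul_cancel₀ _ (ne_of_gt ht0)] at this
  obtain ⟨ε, hε, hball⟩ := Metric.eventually_nhds_iff.1 (hg.and hmax)
  obtain ⟨b, hb0, hb⟩ := mem_nhdsGT_iff_exists_Ioo_subset.1 hpos
  set b' := min (ε/2) b with hb'
  have hb'0 : 0 < b' := lt_min (by linarith) hb0
  have hb'ε : b' < ε := lt_of_le_of_lt (min_le_left _ _) (by linarith)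
  have hmemball : ∀ t ∈ Set.Icc (0:ℝ) b', dist t 0 < ε := by
    intro t ⟨h1t, h2t⟩
    rw [Real.dist_eq, sub_zero, abs_of_nonneg h1t]
    linarith
  have hmono : StrictMonoOn g (Set.Icc 0 b') := by
    apply strictMonoOn_of_deriv_pos (convex_Icc _ _)
    · intro t ht
      exact ((hball (hmemball t ht)).1).continuousAt.continuousWithinAt
    · intro t ht
      rw [interior_Icc] at ht
      rw [((hball (hmemball t ⟨le_of_lt ht.1, le_of_lt ht.2⟩)).1).deriv]
      exact hb ⟨ht.1, lt_of_lt_of_le ht.2 (min_le_right _ _)⟩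
  have h3 : g 0 < g b' :=
    hmono (Set.left_mem_Icc.2 (le_of_lt hb'0)) (Set.right_mem_Icc.2 (le_of_lt hb'0)) hb'0
  have h4 : g b' ≤ g 0 :=
    (hball (by rw [Real.dist_eq, sub_zero, abs_of_pos hb'0]; exact hb'ε)).2
  linarith

open Filter Set in
lemma aux2nd {d : ℕ} {Ω : Set (EuclideanSpace ℝ (Fin d))} (hΩ : IsOpen Ω)
    {g : EuclideanSpace ℝ (Fin d) → ℝ} (hg : ContDiffOn ℝ 2 g Ω)
    {x₀ : EuclideanSpace ℝ (Fin d)} (hx₀ : x₀ ∈ Ω) (hmax : IsLocalMax g x₀)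
    (q : EuclideanSpace ℝ (Fin d)) :
    fderiv ℝ (fderiv ℝ g) x₀ q q ≤ 0 := by
  have hnhds : Ω ∈ nhds x₀ := hΩ.mem_nhds hx₀
  have hdiff : ∀ y ∈ Ω, DifferentiableAt ℝ g y := fun y hy =>
    ((hg.contDiffAt (hΩ.mem_nhds hy)).differentiableAt (by norm_num))
  have hfd : DifferentiableAt ℝ (fderiv ℝ g) x₀ :=
    ((hg.contDiffAt hnhds).fderiv_right (m := 1) (by norm_num)).differentiableAt one_ne_zero
  set c : ℝ → EuclideanSpace ℝ (Fin d) := fun t => x₀ + t • q with hcdef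
  have hc : ∀ t, HasDerivAt c q t := by
    intro t
    have h1 : HasDerivAt (fun s : ℝ => s • q) ((1:ℝ) • q) t := (hasDerivAt_id t).smul_const q
    rw [one_smul] at h1
    exact h1.const_add x₀
  have hc0 : c 0 = x₀ := by simp [hcdef]
  have hcC : Continuous c := by fun_prop
  have hmem : ∀ᶠ t in nhds (0:ℝ), c t ∈ Ω := by
    have : Tendsto c (nhds 0) (nhds x₀) := hc0 ▸ hcC.continuousAt
    exact this.eventually_mem hnhds
  set ψ : ℝ → ℝ := fun t => fderiv ℝ g (c t) q with hψdef
  have hφ : ∀ᶠ t in nhds (0:ℝ), HasDerivAt (g ∘ c) (ψ t) t := by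
    filter_upwards [hmem] with t ht
    exact ((hdiff _ ht).hasFDerivAt.comp_hasDerivAt t (hc t))
  have h1 : HasDerivAt (fun t => fderiv ℝ g (c t)) (fderiv ℝ (fderiv ℝ g) x₀ q) 0 := by
    have hF : HasFDerivAt (fderiv ℝ g) (fderiv ℝ (fderiv ℝ g) x₀) (c 0) := by
      rw [hc0]; exact hfd.hasFDerivAt
    exact hF.comp_hasDerivAt 0 (hc 0)
  have hψd : HasDerivAt ψ (fderiv ℝ (fderiv ℝ g) x₀ q q) 0 := by
    have h2 := h1.clm_apply (hasDerivAt_const 0 q)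
    simpa [hc0] using h2
  have hmax' : IsLocalMax (g ∘ c) 0 := by
    have ht : Tendsto c (nhds 0) (nhds x₀) := hc0 ▸ hcC.continuousAt
    have := ht.eventually hmax
    filter_upwards [this] with t ht2
    simpa [Function.comp, hc0] using ht2
  exact aux1d hφ hψd hmax'

lemma pd2_eq' {d : ℕ} {f : EuclideanSpace ℝ (Fin d) → ℝ} {x₀ : EuclideanSpace ℝ (Fin d)}
    (hfd : DifferentiableAt ℝ (fderiv ℝ f) x₀) (i j : Fin d) :
    pd2 d f x₀ i j =
      fderiv ℝ (fderiv ℝ f) x₀ (EuclideanSpace.single i 1) (EuclideanSpace.single j 1) := by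
  unfold pd2
  set L := ContinuousLinearMap.apply ℝ ℝ (EuclideanSpace.single j 1 : EuclideanSpace ℝ (Fin d))
  have h := L.hasFDerivAt.comp x₀ hfd.hasFDerivAt
  rw [show (fun y => fderiv ℝ f y (EuclideanSpace.single j 1)) = ⇑L ∘ fderiv ℝ f from rfl,
    h.fderiv]
  rfl

lemma quad_expand' {d m' : ℕ}
    (B : EuclideanSpace ℝ (Fin d) →L[ℝ] (EuclideanSpace ℝ (Fin d) →L[ℝ] ℝ))
    (s : Fin d → Fin m' → ℝ) :
    ∑ i, ∑ j, (∑ k, s i k * s j k) * B (EuclideanSpace.single j 1) (EuclideanSpace.single i 1)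
    = ∑ k, B (∑ j, s j k • EuclideanSpace.single j 1) (∑ i, s i k • EuclideanSpace.single i 1) := by
  have hR : ∀ k, B (∑ j, s j k • EuclideanSpace.single j 1) (∑ i, s i k • EuclideanSpace.single i 1)
      = ∑ j, ∑ i, s j k * s i k *
          B (EuclideanSpace.single j 1) (EuclideanSpace.single i 1) := by
    intro k
    have e1 : ∀ Y : EuclideanSpace ℝ (Fin d),
        B Y (∑ i, s i k • EuclideanSpace.single i 1)
          = ∑ i, s i k * B Y (EuclideanSpace.single i 1) := by
      intro Y; rw [map_sum]; simp [smul_eq_mul]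
    have e2 : ∀ Z : EuclideanSpace ℝ (Fin d),
        B (∑ j, s j k • EuclideanSpace.single j 1) Z
          = ∑ j, s j k * B (EuclideanSpace.single j 1) Z := by
      intro Z
      rw [map_sum, ContinuousLinearMap.sum_apply]
      simp [smul_eq_mul]
    rw [e1]
    simp only [e2, Finset.mul_sum]
    rw [Finset.sum_comm]
    refine Finset.sum_congr rfl fun j _ => ?_
    refine Finset.sum_congr rfl fun i _ => ?_
    ring
  simp only [hR]
  conv_lhs => rw [Finset.sum_comm]
  conv_rhs => rw [Finset.sum_comm]
  refine Finset.sum_congr rfl fun j _ => ?_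
  conv_rhs => rw [Finset.sum_comm]
  refine Finset.sum_congr rfl fun i _ => ?_
  rw [Finset.sum_mul]
  exact Finset.sum_congr rfl fun k _ => by ring

lemma bound_aux {d m : ℕ} {M : ℝ} (ru : ℝ) (bu : Fin d → ℝ) (su : Matrix (Fin d) (Fin m) ℝ)
    (p : Fin d → ℝ) (X : Fin d → Fin d → ℝ)
    (hr : |ru| ≤ M) (hb : ∀ i, |bu i| ≤ M) (hs : ∀ i j, |su i j| ≤ M) :
    |ru + ∑ i, bu i * p i + (1/2) * ∑ i, ∑ j, (su * su.transpose) i j * X j i|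
      ≤ M + M * (∑ i, |p i|) + (1/2) * ∑ i, ∑ j, ((m:ℝ) * (M*M)) * |X j i| := by
  have hM0 : 0 ≤ M := le_trans (abs_nonneg _) hr
  have h1 : |∑ i, bu i * p i| ≤ M * ∑ i, |p i| := by
    calc |∑ i, bu i * p i| ≤ ∑ i, |bu i * p i| := Finset.abs_sum_le_sum_abs _ _
    _ ≤ ∑ i, M * |p i| := Finset.sum_le_sum fun i _ => by
        rw [abs_mul]; exact mul_le_mul_of_nonneg_right (hb i) (abs_nonneg _)
    _ = M * ∑ i, |p i| := by rw [Finset.mul_sum]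
  have hS : ∀ i j, |(su * su.transpose) i j| ≤ (m:ℝ) * (M*M) := by
    intro i j
    have e : (su * su.transpose) i j = ∑ k, su i k * su j k := by
      rw [Matrix.mul_apply]; simp [Matrix.transpose_apply]
    rw [e]
    have h1' : |∑ k, su i k * su j k| ≤ ∑ _k : Fin m, M * M := by
      refine le_trans (Finset.abs_sum_le_sum_abs _ _) (Finset.sum_le_sum fun k _ => ?_)
      rw [abs_mul]; exact mul_le_mul (hs _ _) (hs _ _) (abs_nonneg _) hM0
    simpa [Finset.sum_const, Finset.card_univ, nsmul_eq_mul] using h1'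
  have h2 : |∑ i, ∑ j, (su * su.transpose) i j * X j i|
      ≤ ∑ i, ∑ j, ((m:ℝ)*(M*M)) * |X j i| := by
    calc |∑ i, ∑ j, (su * su.transpose) i j * X j i|
        ≤ ∑ i, |∑ j, (su * su.transpose) i j * X j i| := Finset.abs_sum_le_sum_abs _ _
    _ ≤ ∑ i, ∑ j, |(su * su.transpose) i j * X j i| :=
        Finset.sum_le_sum fun i _ => Finset.abs_sum_le_sum_abs _ _
    _ ≤ ∑ i, ∑ j, ((m:ℝ)*(M*M)) * |X j i| :=
        Finset.sum_le_sum fun i _ => Finset.sum_le_sum fun j _ => by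
          rw [abs_mul]; exact mul_le_mul_of_nonneg_right (hS i j) (abs_nonneg _)
  have t1 := abs_add_le (ru + ∑ i, bu i * p i)
    ((1/2) * ∑ i, ∑ j, (su * su.transpose) i j * X j i)
  have t2 := abs_add_le ru (∑ i, bu i * p i)
  have t3 : |(1/2) * ∑ i, ∑ j, (su * su.transpose) i j * X j i|
      = (1/2) * |∑ i, ∑ j, (su * su.transpose) i j * X j i| := by
    rw [abs_mul]; norm_num
  rw [t3] at t1
  linarith

/-- Lemma 4.2: comparison principle in a bounded domain `Ω` for the exploratory
(possibly degenerate) elliptic operator: a bounded classical subsolution `μ` and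
supersolution `v` with `μ ≤ v` on `∂Ω` satisfy `μ ≤ v` in `Ω`. -/
theorem stmt10 (d l m : ℕ) (lam ρ : ℝ) (hlam : 0 < lam) (hρ : 0 < ρ)
    (Ω : Set (EuclideanSpace ℝ (Fin d)))
    (hΩopen : IsOpen Ω) (hΩbdd : Bornology.IsBounded Ω)
    (U : Set (EuclideanSpace ℝ (Fin l)))
    (hUmeas : MeasurableSet U) (hUbdd : Bornology.IsBounded U) (hUvol : volume U = 1)
    (r : EuclideanSpace ℝ (Fin d) → EuclideanSpace ℝ (Fin l) → ℝ)
    (b : EuclideanSpace ℝ (Fin d) → EuclideanSpace ℝ (Fin l) → Fin d → ℝ)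
    (σ' : EuclideanSpace ℝ (Fin d) → EuclideanSpace ℝ (Fin l) → Matrix (Fin d) (Fin m) ℝ)
    -- continuity on Ω̄ × U
    (hrcont : ContinuousOn (fun q : EuclideanSpace ℝ (Fin d) × EuclideanSpace ℝ (Fin l) =>
      r q.1 q.2) (closure Ω ×ˢ U))
    (hbcont : ∀ i, ContinuousOn
      (fun q : EuclideanSpace ℝ (Fin d) × EuclideanSpace ℝ (Fin l) => b q.1 q.2 i)
      (closure Ω ×ˢ U))
    (hσcont : ∀ i j, ContinuousOn
      (fun q : EuclideanSpace ℝ (Fin d) × EuclideanSpace ℝ (Fin l) => σ' q.1 q.2 i j)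
      (closure Ω ×ˢ U))
    -- boundedness on Ω̄ × U
    (hbdd : ∃ M, ∀ x ∈ closure Ω, ∀ u ∈ U,
      |r x u| ≤ M ∧ (∀ i, |b x u i| ≤ M) ∧ (∀ i j, |σ' x u i j| ≤ M))
    -- Lipschitz continuity in x on a neighborhood of Ω̄, uniformly in u ∈ U
    (hlip : ∃ V : Set (EuclideanSpace ℝ (Fin d)), IsOpen V ∧ closure Ω ⊆ V ∧
      ∃ K, ∀ u ∈ U, ∀ x ∈ V, ∀ y ∈ V,
        |r x u - r y u| ≤ K * dist x y ∧
        (∀ i, |b x u i - b y u i| ≤ K * dist x y) ∧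
        (∀ i j, |σ' x u i j - σ' y u i j| ≤ K * dist x y))
    (μ v : EuclideanSpace ℝ (Fin d) → ℝ)
    -- μ, v ∈ C²(Ω) ∩ C(Ω̄), bounded
    (hμreg : ContDiffOn ℝ 2 μ Ω) (hμcont : ContinuousOn μ (closure Ω))
    (hμbdd : ∃ M, ∀ x ∈ closure Ω, |μ x| ≤ M)
    (hvreg : ContDiffOn ℝ 2 v Ω) (hvcont : ContinuousOn v (closure Ω))
    (hvbdd : ∃ M, ∀ x ∈ closure Ω, |v x| ≤ M)
    -- μ is a subsolution and v is a supersolution in Ω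
    (hsub : ∀ x ∈ Ω, ρ * μ x -
      expF d l m lam U r b σ' x (fun i => pd1 d μ x i)
        (Matrix.of fun i j => pd2 d μ x i j) ≤ 0)
    (hsup : ∀ x ∈ Ω, 0 ≤ ρ * v x -
      expF d l m lam U r b σ' x (fun i => pd1 d v x i)
        (Matrix.of fun i j => pd2 d v x i j))
    -- boundary comparison
    (hbd : ∀ x ∈ frontier Ω, μ x ≤ v x) :
    ∀ x ∈ Ω, μ x ≤ v x := by
  intro x hx
  have hclos : IsCompact (closure Ω) :=
    Metric.isCompact_of_isClosed_isBounded isClosed_closure hΩbdd.closure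
  have hne : (closure Ω).Nonempty := ⟨x, subset_closure hx⟩
  have hwcont : ContinuousOn (fun y => μ y - v y) (closure Ω) := hμcont.sub hvcont
  obtain ⟨x₀, hx₀cl, hx₀max⟩ := hclos.exists_isMaxOn hne hwcont
  have hxle : μ x - v x ≤ μ x₀ - v x₀ := hx₀max (subset_closure hx)
  by_contra hcon
  push_neg at hcon
  have hpos : 0 < μ x₀ - v x₀ := by linarith
  have hx₀Ω : x₀ ∈ Ω := by
    by_contra h
    have hfr : x₀ ∈ frontier Ω := by
      rw [hΩopen.frontier_eq]
      exact ⟨hx₀cl, h⟩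
    have := hbd x₀ hfr; linarith
  have hxcl : x₀ ∈ closure Ω := hx₀cl
  have hnhds : Ω ∈ nhds x₀ := hΩopen.mem_nhds hx₀Ω
  have hlocmax : IsLocalMax (fun y => μ y - v y) x₀ := by
    filter_upwards [hnhds] with y hy
    exact hx₀max (subset_closure hy)
  -- first-order condition
  have hμd : DifferentiableAt ℝ μ x₀ := (hμreg.contDiffAt hnhds).differentiableAt (by norm_num)
  have hvd : DifferentiableAt ℝ v x₀ := (hvreg.contDiffAt hnhds).differentiableAt (by norm_num)
  have hfd_eq : fderiv ℝ μ x₀ = fderiv ℝ v x₀ := by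
    have h0 : fderiv ℝ (fun y => μ y - v y) x₀ = 0 := hlocmax.fderiv_eq_zero
    rw [fderiv_fun_sub hμd hvd] at h0
    exact sub_eq_zero.1 h0
  have hpeq : (fun i => pd1 d μ x₀ i) = (fun i => pd1 d v x₀ i) := by
    funext i; simp only [pd1]; rw [hfd_eq]
  -- second-order condition
  have hμfd : DifferentiableAt ℝ (fderiv ℝ μ) x₀ :=
    ((hμreg.contDiffAt hnhds).fderiv_right (m := 1) (by norm_num)).differentiableAt one_ne_zero
  have hvfd : DifferentiableAt ℝ (fderiv ℝ v) x₀ :=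
    ((hvreg.contDiffAt hnhds).fderiv_right (m := 1) (by norm_num)).differentiableAt one_ne_zero
  set Bμ := fderiv ℝ (fderiv ℝ μ) x₀ with hBμdef
  set Bv := fderiv ℝ (fderiv ℝ v) x₀ with hBvdef
  have hBw : fderiv ℝ (fderiv ℝ (fun y => μ y - v y)) x₀ = Bμ - Bv := by
    have hev : (fun y => fderiv ℝ (fun z => μ z - v z) y) =ᶠ[nhds x₀]
        (fun y => fderiv ℝ μ y - fderiv ℝ v y) := by
      filter_upwards [hnhds] with y hy
      exact fderiv_fun_sub
        ((hμreg.contDiffAt (hΩopen.mem_nhds hy)).differentiableAt (by norm_num))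
        ((hvreg.contDiffAt (hΩopen.mem_nhds hy)).differentiableAt (by norm_num))
    rw [hev.fderiv_eq, fderiv_fun_sub hμfd hvfd]
  have hquad : ∀ q, Bμ q q ≤ Bv q q := by
    intro q
    have h2 := aux2nd hΩopen (hμreg.sub hvreg) hx₀Ω hlocmax q
    rw [hBw] at h2
    simp only [ContinuousLinearMap.sub_apply] at h2
    linarith
  have hXμ : ∀ i j, pd2 d μ x₀ i j
      = Bμ (EuclideanSpace.single i 1) (EuclideanSpace.single j 1) := fun i j => pd2_eq' hμfd i j
  have hXv : ∀ i j, pd2 d v x₀ i j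
      = Bv (EuclideanSpace.single i 1) (EuclideanSpace.single j 1) := fun i j => pd2_eq' hvfd i j
  -- trace inequality
  have htr : ∀ u : EuclideanSpace ℝ (Fin l),
      ∑ i, ∑ j, (σ' x₀ u * (σ' x₀ u).transpose) i j * pd2 d μ x₀ j i
      ≤ ∑ i, ∑ j, (σ' x₀ u * (σ' x₀ u).transpose) i j * pd2 d v x₀ j i := by
    intro u
    have hSij : ∀ i j : Fin d, (σ' x₀ u * (σ' x₀ u).transpose) i j
        = ∑ k, σ' x₀ u i k * σ' x₀ u j k := by
      intro i j; rw [Matrix.mul_apply]; simp [Matrix.transpose_apply]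
    calc ∑ i, ∑ j, (σ' x₀ u * (σ' x₀ u).transpose) i j * pd2 d μ x₀ j i
        = ∑ k, Bμ (∑ j, σ' x₀ u j k • EuclideanSpace.single j 1)
            (∑ i, σ' x₀ u i k • EuclideanSpace.single i 1) := by
          simp only [hSij, hXμ]; exact quad_expand' Bμ (fun i k => σ' x₀ u i k)
      _ ≤ ∑ k, Bv (∑ j, σ' x₀ u j k • EuclideanSpace.single j 1)
            (∑ i, σ' x₀ u i k • EuclideanSpace.single i 1) :=
          Finset.sum_le_sum fun k _ => hquad _
      _ = ∑ i, ∑ j, (σ' x₀ u * (σ' x₀ u).transpose) i j * pd2 d v x₀ j i := by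
          simp only [hSij, hXv]; exact (quad_expand' Bv (fun i k => σ' x₀ u i k)).symm
  -- integrability and positivity machinery
  obtain ⟨M, hM⟩ := hbdd
  have hUne : U.Nonempty := by
    rcases Set.eq_empty_or_nonempty U with h | h
    · rw [h] at hUvol; simp at hUvol
    · exact h
  obtain ⟨u₀, hu₀⟩ := hUne
  have hM0 : 0 ≤ M := le_trans (abs_nonneg _) (hM x₀ hxcl u₀ hu₀).1
  haveI : IsFiniteMeasure ((volume : Measure (EuclideanSpace ℝ (Fin l))).restrict U) :=
    ⟨by rw [Measure.restrict_apply_univ, hUvol]; exact ENNReal.one_lt_top⟩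
  set pv : Fin d → ℝ := fun i => pd1 d v x₀ i with hpvdef
  have key : ∀ X : Fin d → Fin d → ℝ,
      Integrable (fun u => Real.exp ((1 / lam) * (r x₀ u + ∑ i, b x₀ u i * pv i +
        (1/2) * ∑ i, ∑ j, (σ' x₀ u * (σ' x₀ u).transpose) i j * X j i)))
        ((volume : Measure (EuclideanSpace ℝ (Fin l))).restrict U) ∧
      0 < ∫ u in U, Real.exp ((1 / lam) * (r x₀ u + ∑ i, b x₀ u i * pv i +
        (1/2) * ∑ i, ∑ j, (σ' x₀ u * (σ' x₀ u).transpose) i j * X j i)) := by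
    intro X
    set C : ℝ := M + M * (∑ i, |pv i|) + (1/2) * ∑ i, ∑ j, ((m:ℝ) * (M*M)) * |X j i| with hC
    set G : EuclideanSpace ℝ (Fin l) → ℝ := fun u => r x₀ u + ∑ i, b x₀ u i * pv i +
      (1/2) * ∑ i, ∑ j, (σ' x₀ u * (σ' x₀ u).transpose) i j * X j i with hG
    have hGb : ∀ u ∈ U, |G u| ≤ C := fun u hu =>
      bound_aux (r x₀ u) (b x₀ u) (σ' x₀ u) pv X (hM x₀ hxcl u hu).1 (hM x₀ hxcl u hu).2.1
        (hM x₀ hxcl u hu).2.2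
    -- continuity in u
    have hcomp : Continuous (fun u : EuclideanSpace ℝ (Fin l) =>
        ((x₀ : EuclideanSpace ℝ (Fin d)), u)) := continuous_const.prodMk continuous_id
    have hmaps : ∀ u ∈ U, ((x₀ : EuclideanSpace ℝ (Fin d)), u) ∈ closure Ω ×ˢ U :=
      fun u hu => Set.mk_mem_prod hxcl hu
    have hrU : ContinuousOn (fun u => r x₀ u) U := hrcont.comp hcomp.continuousOn hmaps
    have hbU : ∀ i, ContinuousOn (fun u => b x₀ u i) U := fun i =>
      (hbcont i).comp hcomp.continuousOn hmaps
    have hσU : ∀ i j, ContinuousOn (fun u => σ' x₀ u i j) U := fun i j =>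
      (hσcont i j).comp hcomp.continuousOn hmaps
    have hSU : ∀ i j, ContinuousOn (fun u => (σ' x₀ u * (σ' x₀ u).transpose) i j) U := by
      intro i j
      have e : ∀ u : EuclideanSpace ℝ (Fin l), (σ' x₀ u * (σ' x₀ u).transpose) i j
          = ∑ k, σ' x₀ u i k * σ' x₀ u j k := by
        intro u; rw [Matrix.mul_apply]; simp [Matrix.transpose_apply]
      simp only [e]
      exact continuousOn_finset_sum _ fun k _ => (hσU i k).mul (hσU j k)
    have hGU : ContinuousOn G U := by
      apply ContinuousOn.add
      · apply ContinuousOn.add hrU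
        exact continuousOn_finset_sum _ fun i _ => (hbU i).mul continuousOn_const
      · exact continuousOn_const.mul (continuousOn_finset_sum _ fun i _ =>
          continuousOn_finset_sum _ fun j _ => (hSU i j).mul continuousOn_const)
    have hexpU : ContinuousOn (fun u => Real.exp ((1 / lam) * G u)) U :=
      Real.continuous_exp.comp_continuousOn (continuousOn_const.mul hGU)
    have hint : Integrable (fun u => Real.exp ((1 / lam) * G u))
        ((volume : Measure (EuclideanSpace ℝ (Fin l))).restrict U) := by
      apply Integrable.mono' (integrable_const (Real.exp ((1 / lam) * C)))
        (hexpU.aestronglyMeasurable hUmeas)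
      refine (ae_restrict_iff' hUmeas).2 (Filter.Eventually.of_forall fun u hu => ?_)
      rw [Real.norm_eq_abs, abs_of_pos (Real.exp_pos _)]
      exact Real.exp_le_exp.2 (mul_le_mul_of_nonneg_left
        (le_trans (le_abs_self _) (hGb u hu)) (by positivity))
    refine ⟨hint, ?_⟩
    have hlow : ∀ u ∈ U, Real.exp (-((1 / lam) * C)) ≤ Real.exp ((1 / lam) * G u) := by
      intro u hu
      apply Real.exp_le_exp.2
      rw [← mul_neg]
      exact mul_le_mul_of_nonneg_left (neg_le_of_abs_le (hGb u hu)) (by positivity)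
    have hge := setIntegral_ge_of_const_le hUmeas
      (by rw [hUvol]; exact ENNReal.one_ne_top) hlow hint
    rw [measureReal_def, hUvol, ENNReal.toReal_one, one_smul] at hge
    exact lt_of_lt_of_le (Real.exp_pos _) hge
  -- final chain
  have h1 := hsub x₀ hx₀Ω
  have h2 := hsup x₀ hx₀Ω
  rw [hpeq] at h1
  simp only [expF, Matrix.of_apply] at h1 h2
  obtain ⟨hintμ, hposμ⟩ := key (fun i j => pd2 d μ x₀ i j)
  obtain ⟨hintv, hposv⟩ := key (fun i j => pd2 d v x₀ i j)
  have hIle : (∫ u in U, Real.exp ((1 / lam) * (r x₀ u + ∑ i, b x₀ u i * pv i +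
        (1/2) * ∑ i, ∑ j, (σ' x₀ u * (σ' x₀ u).transpose) i j * pd2 d μ x₀ j i)))
      ≤ ∫ u in U, Real.exp ((1 / lam) * (r x₀ u + ∑ i, b x₀ u i * pv i +
        (1/2) * ∑ i, ∑ j, (σ' x₀ u * (σ' x₀ u).transpose) i j * pd2 d v x₀ j i)) := by
    apply setIntegral_mono_on hintμ hintv hUmeas
    intro u hu
    apply Real.exp_le_exp.2
    apply mul_le_mul_of_nonneg_left _ (by positivity)
    have := htr u
    linarith
  have hlog : lam * Real.log (∫ u in U, Real.exp ((1 / lam) * (r x₀ u +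
        ∑ i, b x₀ u i * pv i +
        (1/2) * ∑ i, ∑ j, (σ' x₀ u * (σ' x₀ u).transpose) i j * pd2 d μ x₀ j i)))
      ≤ lam * Real.log (∫ u in U, Real.exp ((1 / lam) * (r x₀ u +
        ∑ i, b x₀ u i * pv i +
        (1/2) * ∑ i, ∑ j, (σ' x₀ u * (σ' x₀ u).transpose) i j * pd2 d v x₀ j i))) :=
    mul_le_mul_of_nonneg_left (Real.log_le_log hposμ hIle) hlam.le
  have hfinal : ρ * μ x₀ ≤ ρ * v x₀ := by
    have e1 : ρ * μ x₀ ≤ lam * Real.log (∫ u in U, Real.exp ((1 / lam) * (r x₀ u +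
        ∑ i, b x₀ u i * pv i +
        (1/2) * ∑ i, ∑ j, (σ' x₀ u * (σ' x₀ u).transpose) i j * pd2 d μ x₀ j i))) := by
      linarith
    have e2 : lam * Real.log (∫ u in U, Real.exp ((1 / lam) * (r x₀ u +
        ∑ i, b x₀ u i * pv i +
        (1/2) * ∑ i, ∑ j, (σ' x₀ u * (σ' x₀ u).transpose) i j * pd2 d v x₀ j i)))
        ≤ ρ * v x₀ := by linarith
    linarith
  have := (mul_le_mul_iff_right₀ hρ).1 hfinal
  linarith
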